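/- If positive integers m_1, ..., m_k with 1/m_1 + ... + 1/m_k = 1 admit sets S_1, ..., S_k ⊆ ℤ covering ℤ with distinct elements of each S_i differing by at least m_i, then in fact each S_i may be taken to be (indeed, any such periodic schedule is) a full residue class: there exist integers r_1, ..., r_k such that the sets {t ∈ ℤ : t ≡ r_i (mod m_i)} partition ℤ. -/

import Mathlib

/-!
Let `L` be a common multiple of the `m i`. An `m i`-separated set meets every window of
`L` consecutive integers at most `L / m i` times, and these bounds add up to `L`, while
covering the window needs at least `L` visits. So every bound is attained: the `S i` are
pairwise disjoint and every window of length `m i` contains exactly one point of `S i`,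
which makes `S i` periodic with period `m i`, i.e. a single residue class.
-/

open Finset

def Separated (m : ℕ) (S : Set ℤ) : Prop :=
  ∀ t₁ ∈ S, ∀ t₂ ∈ S, t₁ ≠ t₂ → (m : ℤ) ≤ |t₁ - t₂|

noncomputable def visitCount (S : Set ℤ) [DecidablePred (· ∈ S)] (a : ℤ) (n : ℕ) : ℕ :=
  #{x ∈ Ico a (a + n) | x ∈ S}

theorem sum_div_eq_of_sum_one_div_eq_one {ι : Type*} (s : Finset ι) {m : ι → ℕ} {L : ℕ}
    (hdvd : ∀ i ∈ s, m i ∣ L) (h : ∑ i ∈ s, (1 : ℝ) / m i = 1) : ∑ i ∈ s, L / m i = L := by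
  have : ((∑ i ∈ s, L / m i : ℕ) : ℝ) = L := by
    rw [Nat.cast_sum, sum_congr rfl fun i hi => Nat.cast_div_charZero (hdvd i hi)]
    simp_rw [div_eq_mul_one_div (L : ℝ)]
    rw [← mul_sum, h, mul_one]
  exact_mod_cast this

namespace visitCount

variable {S : Set ℤ} [DecidablePred (· ∈ S)] {m : ℕ}

theorem exists_mem {a : ℤ} {n : ℕ} (h : visitCount S a n = 1) :
    ∃ y ∈ S, a ≤ y ∧ y < a + n := by
  obtain ⟨y, hy⟩ := card_pos.mp (h ▸ Nat.one_pos)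
  simp only [mem_filter, mem_Ico] at hy
  exact ⟨y, hy.2, hy.1⟩

theorem eq_of_mem {a y z : ℤ} {n : ℕ} (h : visitCount S a n ≤ 1) (hy : y ∈ S) (hz : z ∈ S)
    (hya : a ≤ y) (hyn : y < a + n) (hza : a ≤ z) (hzn : z < a + n) : y = z :=
  card_le_one.mp h y (by simp [*]) z (by simp [*])

theorem add (a : ℤ) (n n' : ℕ) :
    visitCount S a (n + n') = visitCount S a n + visitCount S (a + n) n' := by
  have hsplit : Ico a (a + n) ∪ Ico (a + n) (a + n + n') = Ico a (a + (n + n' : ℕ)) := by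
    push_cast
    rw [← add_assoc]
    exact Ico_union_Ico_eq_Ico (by omega) (by omega)
  rw [visitCount, ← hsplit, filter_union, card_union_of_disjoint
    (disjoint_filter_filter (Ico_disjoint_Ico_consecutive _ _ _))]
  rfl

theorem le_one (hS : Separated m S) (a : ℤ) : visitCount S a m ≤ 1 := by
  refine card_le_one.mpr fun x hx y hy => by_contra fun hne => ?_
  simp only [mem_filter, mem_Ico] at hx hy
  have hfar := hS x hx.2 y hy.2 hne
  have hnear : |x - y| < m := abs_sub_lt_iff.mpr ⟨by omega, by omega⟩
  omega

theorem mul_le (hS : Separated m S) (a : ℤ) (q : ℕ) : visitCount S a (q * m) ≤ q := by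
  induction q generalizing a with
  | zero => simp [visitCount]
  | succ q ih =>
    rw [add_mul, one_mul, add_comm, add]
    linarith [le_one hS a, ih (a + m)]

theorem le_div (hS : Separated m S) {L : ℕ} (hdvd : m ∣ L) (a : ℤ) :
    visitCount S a L ≤ L / m := by
  simpa [Nat.div_mul_cancel hdvd] using mul_le hS a (L / m)

theorem eq_one_of_mul_eq (hS : Separated m S) {a : ℤ} {q : ℕ} (hq : 0 < q)
    (h : visitCount S a (q * m) = q) : visitCount S a m = 1 := by
  obtain ⟨q, rfl⟩ := Nat.exists_eq_add_one_of_ne_zero hq.ne'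
  rw [add_mul, one_mul, add_comm, add] at h
  linarith [le_one hS a, mul_le hS (a + m) q]

section Periodic

variable (h : ∀ a, visitCount S a m = 1)
include h

theorem add_mem_of_mem {x : ℤ} (hx : x ∈ S) : x + m ∈ S := by
  obtain ⟨y, hy, hxy, hyx⟩ := exists_mem (h (x + 1))
  obtain rfl : y = x + m := by
    by_contra hne
    have := eq_of_mem (h x).le hy hx (by omega) (by omega) le_rfl (by omega)
    omega
  exact hy

theorem mem_of_add_mem {x : ℤ} (hx : x + m ∈ S) : x ∈ S := by
  obtain ⟨y, hy, hxy, hyx⟩ := exists_mem (h x)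
  obtain rfl : y = x := by
    have := eq_of_mem (h (x + m)).le (add_mem_of_mem h hy) hx
      (by omega) (by omega) le_rfl (by omega)
    omega
  exact hy

theorem exists_forall_mem_iff_dvd : ∃ r : ℤ, ∀ x, x ∈ S ↔ (m : ℤ) ∣ x - r := by
  have hper : Function.Periodic (· ∈ S) (m : ℤ) := fun x =>
    propext ⟨mem_of_add_mem h, add_mem_of_mem h⟩
  obtain ⟨r, hr, hr0, hrm⟩ := exists_mem (h 0)
  refine ⟨r, fun x => ⟨fun hx => ?_, fun ⟨q, hq⟩ => ?_⟩⟩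
  · have hm : (0 : ℤ) < m := by omega
    have hx' : r + (x - r) % m ∈ S := by
      rw [Int.emod_def, show r + (x - r - m * ((x - r) / m)) = x - (x - r) / m * m by ring]
      exact (hper.sub_int_mul_eq _).symm ▸ hx
    have h0 := Int.emod_nonneg (x - r) hm.ne'
    have h1 := Int.emod_lt_of_pos (x - r) hm
    have := eq_of_mem (h r).le hx' hr (by omega) (by omega) le_rfl (by omega)
    exact Int.dvd_of_emod_eq_zero (by omega)
  · rw [sub_eq_iff_eq_add'.mp hq, mul_comm]
    exact hper.int_mul q r ▸ hr

end Periodic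

end visitCount

section Cover

variable {ι : Type*} [Fintype ι] {S : ι → Set ℤ} [∀ i, DecidablePred (· ∈ S i)]
  {m : ι → ℕ} {L : ℕ}

theorem sum_visitCount_eq_sum_card (a : ℤ) (n : ℕ) :
    ∑ i, visitCount (S i) a n = ∑ x ∈ Ico a (a + n), #{i | x ∈ S i} := by
  simp only [visitCount, card_filter]
  exact sum_comm

theorem one_le_card_of_iUnion_eq_univ (hcov : ⋃ i, S i = Set.univ) (x : ℤ) :
    1 ≤ #{i | x ∈ S i} := by
  obtain ⟨i, hi⟩ := Set.mem_iUnion.mp (hcov ▸ Set.mem_univ x)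
  exact card_pos.mpr ⟨i, mem_filter.mpr ⟨mem_univ i, hi⟩⟩

variable (hcov : ⋃ i, S i = Set.univ) (hsep : ∀ i, Separated (m i) (S i))
  (hdvd : ∀ i, m i ∣ L) (hL : ∑ i, L / m i = L)
include hcov hsep hdvd hL

theorem sum_visitCount_eq (a : ℤ) : ∑ i, visitCount (S i) a L = L := by
  refine le_antisymm ((sum_le_sum fun i _ => visitCount.le_div (hsep i) (hdvd i) a).trans hL.le) ?_
  calc L = ∑ _x ∈ Ico a (a + L), 1 := by simp
    _ ≤ ∑ x ∈ Ico a (a + L), #{i | x ∈ S i} :=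
      sum_le_sum fun x _ => one_le_card_of_iUnion_eq_univ hcov x
    _ = ∑ i, visitCount (S i) a L := (sum_visitCount_eq_sum_card a L).symm

theorem visitCount_eq_div (i : ι) (a : ℤ) : visitCount (S i) a L = L / m i :=
  (sum_eq_sum_iff_of_le fun j _ => visitCount.le_div (hsep j) (hdvd j) a).mp
    ((sum_visitCount_eq hcov hsep hdvd hL a).trans hL.symm) i (mem_univ i)

theorem eq_of_mem_of_mem (hL0 : 0 < L) {x : ℤ} {i j : ι} (hi : x ∈ S i) (hj : x ∈ S j) :
    i = j := by
  have hsum : ∑ _y ∈ Ico x (x + L), 1 = ∑ y ∈ Ico x (x + L), #{i | y ∈ S i} := by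
    rw [← sum_visitCount_eq_sum_card, sum_visitCount_eq hcov hsep hdvd hL]
    simp
  have hx : #{i | x ∈ S i} = 1 :=
    ((sum_eq_sum_iff_of_le fun y _ => one_le_card_of_iUnion_eq_univ hcov y).mp hsum x
      (by simp; omega)).symm
  exact card_le_one.mp hx.le i (by simpa using hi) j (by simpa using hj)

end Cover

/-- if `∑ 1/(m i) = 1` and there is a good schedule for `(m i)`,
then there are residues `r i` such that the residue classes `r i (mod m i)`
partition `ℤ` (every integer is in exactly one class). -/
theorem stmt_9 (k : ℕ) (m : Fin k → ℕ) (hm : ∀ i, 0 < m i)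
    (hsum : ∑ i, (1 : ℝ) / m i = 1)
    (hgood : ∃ S : Fin k → Set ℤ, (⋃ i, S i) = Set.univ ∧
      ∀ i, ∀ t₁ ∈ S i, ∀ t₂ ∈ S i, t₁ ≠ t₂ → ((m i : ℤ) ≤ |t₁ - t₂|)) :
    ∃ r : Fin k → ℤ, ∀ x : ℤ, ∃! i, (m i : ℤ) ∣ x - r i := by
  classical
  obtain ⟨S, hcov, hsep⟩ := hgood
  set L := ∏ i, m i
  have hdvd (i : Fin k) : m i ∣ L := dvd_prod_of_mem _ (mem_univ i)
  have hL0 : 0 < L := prod_pos fun i _ => hm i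
  have hL : ∑ i, L / m i = L := sum_div_eq_of_sum_one_div_eq_one _ (fun i _ => hdvd i) hsum
  have hclass (i : Fin k) : ∃ r : ℤ, ∀ x, x ∈ S i ↔ (m i : ℤ) ∣ x - r := by
    refine visitCount.exists_forall_mem_iff_dvd fun a => visitCount.eq_one_of_mul_eq (hsep i)
      (Nat.div_pos (Nat.le_of_dvd hL0 (hdvd i)) (hm i)) ?_
    rw [Nat.div_mul_cancel (hdvd i)]
    exact visitCount_eq_div hcov hsep hdvd hL i a
  choose r hr using hclass
  refine ⟨r, fun x => ?_⟩
  obtain ⟨i, hi⟩ := Set.mem_iUnion.mp (hcov ▸ Set.mem_univ x)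
  exact ⟨i, (hr i x).mp hi, fun j hj =>
    eq_of_mem_of_mem hcov hsep hdvd hL hL0 ((hr j x).mpr hj) hi⟩
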